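/- arXiv:1304.6593 — 2 statements merged into one kernel-verified Lean document; each statement's English description precedes it below -/
import Mathlib

section
/- Let (V,E) be a multigraph and F a finite multiset of unordered pairs of distinct nodes of V such that (V, E ∪ F) is 2-edge-connected. Suppose F contains two parallel links e₁ and e₂, both with endpoints x and y, where x and y lie in different connected components of (V,E), and suppose F contains a further link e* (a copy distinct from e₁ and e₂) one of whose endpoints lies in the same connected component of (V,E) as x and whose other endpoint lies in the same connected component of (V,E) as y. Then (V, E ∪ (F minus one copy of e₁)) is also 2-edge-connected. -/
open scoped Classical

/-- The number of edges of the edge multiset `Es` (counted with multiplicity)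
with exactly one endpoint in `X`. -/
noncomputable def cutDeg {V : Type*} (Es : Multiset (Sym2 V)) (X : Finset V) : ℕ :=
  Multiset.card (Es.filter (fun e => ∃ u v, e = s(u, v) ∧ u ∈ X ∧ v ∉ X))

/-- The multigraph `(V, Es)` is `k`-edge-connected. -/
def KEdgeConnected {V : Type*} [Fintype V] (Es : Multiset (Sym2 V)) (k : ℕ) : Prop :=
  2 ≤ Fintype.card V ∧
    ∀ X : Finset V, X ≠ ∅ → X ≠ Finset.univ → k ≤ cutDeg Es X

/-- The simple graph underlying a multiset of edges: `u` and `v` are adjacent iff they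
are distinct and joined by at least one edge. -/
def toSimple {V : Type*} (Es : Multiset (Sym2 V)) : SimpleGraph V where
  Adj u v := u ≠ v ∧ s(u, v) ∈ Es
  symm := by
    constructor
    intro u v h
    exact ⟨h.1.symm, by rw [Sym2.eq_swap]; exact h.2⟩
  loopless := by constructor; intro v h; exact h.1 rfl

/-!
Two copies of `s(x, y)` lie in `F`, so after erasing one the other remains. If it does not cross
a cut `X`, erasing it leaves the cut degree unchanged. If it crosses `X`, a second crossing edge
survives: either an edge of `E` crosses `X`, or no edge of `E` does, and then the components of
`x` and `y` in `(V, E)` lie on opposite sides of `X`, so the further link `e*` crosses `X`.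
-/

section Cut

open Multiset

variable {V : Type*}

def Crosses (X : Finset V) (e : Sym2 V) : Prop :=
  ∃ u v, e = s(u, v) ∧ u ∈ X ∧ v ∉ X

variable {X : Finset V}

theorem cutDeg_eq_card_filter_crosses (S : Multiset (Sym2 V)) :
    cutDeg S X = card (S.filter (Crosses X)) :=
  rfl

theorem crosses_mk {u v : V} : Crosses X s(u, v) ↔ ¬(u ∈ X ↔ v ∈ X) := by
  constructor
  · rintro ⟨u', v', huv, hu', hv'⟩
    rcases Sym2.eq_iff.1 huv with ⟨rfl, rfl⟩ | ⟨rfl, rfl⟩ <;> tauto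
  · intro h
    by_cases hu : u ∈ X
    · exact ⟨u, v, rfl, hu, fun hv => h (iff_of_true hu hv)⟩
    · exact ⟨v, u, Sym2.eq_swap, by tauto, hu⟩

theorem not_crosses_mk {u v : V} : ¬Crosses X s(u, v) ↔ (u ∈ X ↔ v ∈ X) := by
  rw [crosses_mk, not_not]

theorem cutDeg_cons_of_crosses {e : Sym2 V} (S : Multiset (Sym2 V)) (h : Crosses X e) :
    cutDeg (e ::ₘ S) X = cutDeg S X + 1 := by
  rw [cutDeg_eq_card_filter_crosses, filter_cons_of_pos _ h, card_cons,
    cutDeg_eq_card_filter_crosses]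

theorem cutDeg_cons_of_not_crosses {e : Sym2 V} (S : Multiset (Sym2 V)) (h : ¬Crosses X e) :
    cutDeg (e ::ₘ S) X = cutDeg S X := by
  rw [cutDeg_eq_card_filter_crosses, filter_cons_of_neg _ h, cutDeg_eq_card_filter_crosses]

theorem cutDeg_pos_of_mem {S : Multiset (Sym2 V)} {e : Sym2 V} (he : e ∈ S) (h : Crosses X e) :
    0 < cutDeg S X :=
  card_pos_iff_exists_mem.2 ⟨e, mem_filter.2 ⟨he, h⟩⟩

theorem mem_iff_mem_of_reachable {E : Multiset (Sym2 V)} (hE : ∀ g ∈ E, ¬Crosses X g)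
    {u v : V} (h : (toSimple E).Reachable u v) : u ∈ X ↔ v ∈ X := by
  obtain ⟨w⟩ := h
  induction w with
  | nil => rfl
  | cons hadj _ ih => exact (not_crosses_mk.1 (hE _ hadj.2)).trans ih

theorem exists_crosses_or_crosses_of_reachable {E : Multiset (Sym2 V)} {a b x y : V}
    (hax : (toSimple E).Reachable a x) (hby : (toSimple E).Reachable b y)
    (hxy : Crosses X s(x, y)) : (∃ g ∈ E, Crosses X g) ∨ Crosses X s(a, b) := by
  by_contra! h
  rw [crosses_mk] at hxy
  exact hxy ((mem_iff_mem_of_reachable h.1 hax).symm.trans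
    ((not_crosses_mk.1 h.2).trans (mem_iff_mem_of_reachable h.1 hby)))

end Cut

open Multiset in
theorem twoEdgeConnected_erase_parallel_diff_components_general
    {V : Type*} [Fintype V] [DecidableEq V]
    (E F : Multiset (Sym2 V))
    (x y : V) (hcount : 2 ≤ F.count s(x, y))
    (hstar : ∃ a b : V, (toSimple E).Reachable a x ∧ (toSimple E).Reachable b y ∧
      s(a, b) ∈ (F.erase s(x, y)).erase s(x, y))
    (h2ec : KEdgeConnected (E + F) 2) :
    KEdgeConnected (E + F.erase s(x, y)) 2 := by
  obtain ⟨a, b, hax, hby, hab⟩ := hstar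
  have hxy : s(x, y) ∈ F.erase s(x, y) := by
    rw [← count_pos, count_erase_self]
    omega
  have hrest : E + F.erase s(x, y) = s(x, y) ::ₘ (E + (F.erase s(x, y)).erase s(x, y)) := by
    rw [← add_cons, cons_erase hxy]
  refine ⟨h2ec.1, fun X hX hXuniv => ?_⟩
  by_cases hcross : Crosses X s(x, y)
  · obtain ⟨g, hg, hgX⟩ : ∃ g ∈ E + (F.erase s(x, y)).erase s(x, y), Crosses X g := by
      rcases exists_crosses_or_crosses_of_reachable hax hby hcross with ⟨g, hgE, hgX⟩ | habX
      · exact ⟨g, mem_add.2 (Or.inl hgE), hgX⟩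
      · exact ⟨_, mem_add.2 (Or.inr hab), habX⟩
    rw [hrest, cutDeg_cons_of_crosses _ hcross]
    have := cutDeg_pos_of_mem hg hgX
    omega
  · have hsplit : E + F = s(x, y) ::ₘ (E + F.erase s(x, y)) := by
      rw [← add_cons, cons_erase (mem_of_mem_erase hxy)]
    rw [← cutDeg_cons_of_not_crosses _ hcross, ← hsplit]
    exact h2ec.2 X hX hXuniv

/-- Suppose `(V, E ∪ F)` is 2-edge-connected, `F` contains two parallel links with
endpoints `x` and `y` lying in different connected components of `(V, E)`, and `F`
contains a further link `e*` (a copy distinct from the two parallel links) whose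
endpoints lie in the components of `x` and of `y`, respectively.  Then removing one
copy of the parallel link keeps the graph 2-edge-connected. -/
theorem twoEdgeConnected_erase_parallel_diff_components
    {V : Type*} [Fintype V] [DecidableEq V]
    (E F : Multiset (Sym2 V))
    (hE : ∀ e ∈ E, ¬ e.IsDiag) (hF : ∀ e ∈ F, ¬ e.IsDiag)
    (x y : V) (hxy : x ≠ y) (hcount : 2 ≤ F.count s(x, y))
    (hnreach : ¬ (toSimple E).Reachable x y)
    (hstar : ∃ a b : V, (toSimple E).Reachable a x ∧ (toSimple E).Reachable b y ∧
      s(a, b) ∈ (F.erase s(x, y)).erase s(x, y))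
    (h2ec : KEdgeConnected (E + F) 2) :
    KEdgeConnected (E + F.erase s(x, y)) 2 :=
  twoEdgeConnected_erase_parallel_diff_components_general E F x y hcount hstar h2ec
end

section
/- Let (V,E) be a forest with connected components (V₁,E₁), …, (V_r,E_r), r ≥ 2, equipped with a metric weighted link instance with parameter p (with respect to a fixed choice of the selector nodes S_t(u,V_j)), and let u be a leaf of (V₁,E₁). If there exists at least one feasible solution, then there exists an optimal feasible solution F such that for every link (u,v,t) ∈ F incident to u, the node v belongs to R ∪ S_u, where R is the set of nodes whose degree in the forest is not equal to 2, and S_u = { S_t(u,V_j) : 1 ≤ t ≤ p, j ≠ 1 }. -/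
open scoped Classical ENNReal

/-- `e` is an edge of the (unique) `a`–`b` path in the graph `G`: `a` and `b` are in
the same component and every `a`–`b` walk traverses `e`.  (In a forest this says that
`e` lies on the unique path `P(a,b)` inside the common component of `a` and `b`.) -/
def OnPath {V : Type*} (G : SimpleGraph V) (a b : V) (e : Sym2 V) : Prop :=
  G.Reachable a b ∧ ∀ w : G.Walk a b, e ∈ w.edges

/-- A link `(u, v, t)` is valid for parameter `p`. -/
def ValidLink {V : Type*} (p : ℕ) (l : V × V × ℕ) : Prop :=
  l.1 ≠ l.2.1 ∧ 1 ≤ l.2.2 ∧ l.2.2 ≤ p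

/-- The link `f` is a shadow of the link `e` (with respect to the selector `sel`):
either `f = e`; or both are internal links of the same component with `w(f) ≥ w(e)`
and `P(f) ⊆ P(e)`; or both are foliate external links at a common leaf, with the other
endpoints in a common component `K`, `w(f) ≥ w(e)` and `P(f) ⊆ P(e)`, where the path
of a foliate link `(u, x, t)` is the path from `x` to the selector node `sel u K t`. -/
def IsShadowF {V : Type*} [Fintype V] (G : SimpleGraph V) [DecidableRel G.Adj]
    (sel : V → G.ConnectedComponent → ℕ → V) (f e : V × V × ℕ) : Prop :=
  f = e ∨
  (G.Reachable e.1 e.2.1 ∧ G.Reachable f.1 f.2.1 ∧ G.Reachable e.1 f.1 ∧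
    e.2.2 ≤ f.2.2 ∧ ∀ ed : Sym2 V, OnPath G f.1 f.2.1 ed → OnPath G e.1 e.2.1 ed) ∨
  (e.1 = f.1 ∧ G.degree e.1 = 1 ∧ ¬ G.Reachable e.1 e.2.1 ∧
    G.Reachable e.2.1 f.2.1 ∧ e.2.2 ≤ f.2.2 ∧
    ∀ ed : Sym2 V,
      OnPath G f.2.1 (sel e.1 (G.connectedComponentMk e.2.1) f.2.2) ed →
      OnPath G e.2.1 (sel e.1 (G.connectedComponentMk e.2.1) e.2.2) ed)

/-- The weighted link instance `c` with parameter `p` on the forest `G` is metric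
(with respect to the fixed selector choice `sel`): shadows are no more expensive, and
the triangle inequalities hold. -/
def IsMetricForestInstance {V : Type*} [Fintype V] (G : SimpleGraph V)
    [DecidableRel G.Adj] (sel : V → G.ConnectedComponent → ℕ → V) (p : ℕ)
    (c : V → V → ℕ → ℝ≥0∞) : Prop :=
  (∀ e f : V × V × ℕ, ValidLink p e → ValidLink p f → IsShadowF G sel f e →
      c f.1 f.2.1 f.2.2 ≤ c e.1 e.2.1 e.2.2) ∧
  (∀ u v z : V, ∀ t₁ t₂ t₃ : ℕ, u ≠ v → v ≠ z → u ≠ z →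
      1 ≤ t₁ → 1 ≤ t₂ → t₃ ≤ p → t₁ + t₂ ≤ t₃ →
      c u z t₃ ≤ c u v t₁ + c v z t₂)

/-- A solution (multiset of links) is feasible: all links are valid, the total weight
is at most `p`, and adding the links to the forest yields a 2-edge-connected graph. -/
def FeasibleF {V : Type*} [Fintype V] (G : SimpleGraph V) [DecidableRel G.Adj]
    (p : ℕ) (F : Multiset (V × V × ℕ)) : Prop :=
  (∀ l ∈ F, ValidLink p l) ∧ (F.map (fun l => l.2.2)).sum ≤ p ∧
    KEdgeConnected (G.edgeFinset.val + F.map (fun l => s(l.1, l.2.1))) 2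

/-- The total cost of a solution. -/
noncomputable def solCost {V : Type*} (c : V → V → ℕ → ℝ≥0∞)
    (F : Multiset (V × V × ℕ)) : ℝ≥0∞ :=
  (F.map (fun l => c l.1 l.2.1 l.2.2)).sum

/-!
Among the optimal solutions in which `u` occurs only as the first endpoint of a link, take one
minimising first the number of links and then the total distance from the far ends of the links
at `u` to their targets (`u` for internal links, the selector for external ones). Suppose a link
`(u, v, t)` of it has `deg v = 2` and `v` is not a selector, and let `v₁` be the neighbour of `v`
towards the target. If every cut separating `v` from `u` and `v₁` has at least three edges, the
link can be replaced by its shadow `(u, v₁, t)` (or dropped if `v₁ = u`). Otherwise some cut `X`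
is crossed only by the edge `vv₁` and the link; since `X \ {v}` is crossed twice as well, there
is a second link `vy` with `y ∈ X`, and posimodularity of the cut function against `X` shows that
every cut separating `v` from `u` and `y` has at least four edges. Then the two links split off
into `(u, y, t + t')`, which costs no more by the triangle inequality. Either way the potential
drops, a contradiction.
-/

open Multiset

section Cuts

variable {V : Type*}

def Joins (A B : Finset V) (e : Sym2 V) : Prop :=
  ∃ a b, e = s(a, b) ∧ a ∈ A ∧ b ∈ B

theorem joins_mk {A B : Finset V} {a b : V} :
    Joins A B s(a, b) ↔ a ∈ A ∧ b ∈ B ∨ b ∈ A ∧ a ∈ B := by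
  constructor
  · rintro ⟨x, y, he, hx, hy⟩
    rcases Sym2.eq_iff.1 he with ⟨rfl, rfl⟩ | ⟨rfl, rfl⟩ <;> tauto
  · rintro (⟨ha, hb⟩ | ⟨hb, ha⟩)
    · exact ⟨a, b, rfl, ha, hb⟩
    · exact ⟨b, a, Sym2.eq_swap, hb, ha⟩

variable [Fintype V]

theorem cutDeg_eq_countP (Es : Multiset (Sym2 V)) (X : Finset V) :
    cutDeg Es X = Es.countP (Joins X Xᶜ) := by
  rw [countP_eq_card_filter, cutDeg]
  congr 2
  ext e
  simp only [Joins, Finset.mem_compl]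

theorem cutDeg_cons_mk (a b : V) (Es : Multiset (Sym2 V)) (X : Finset V) :
    cutDeg (s(a, b) ::ₘ Es) X = cutDeg Es X + if (a ∈ X ↔ b ∉ X) then 1 else 0 := by
  simp only [cutDeg_eq_countP, countP_cons, joins_mk, Finset.mem_compl]
  congr 2
  apply propext
  tauto

theorem cutDeg_compl (Es : Multiset (Sym2 V)) (X : Finset V) : cutDeg Es Xᶜ = cutDeg Es X := by
  induction Es using Multiset.induction_on with
  | empty => rfl
  | cons e Es ih =>
    induction e using Sym2.ind with
    | _ a b =>
      simp only [cutDeg_cons_mk, ih, Finset.mem_compl]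
      congr 2
      apply propext
      tauto

theorem cutDeg_cons_self (a : V) (Es : Multiset (Sym2 V)) (X : Finset V) :
    cutDeg (s(a, a) ::ₘ Es) X = cutDeg Es X := by
  simp [cutDeg_cons_mk]

theorem kEdgeConnected_of_forall_mem {Es : Multiset (Sym2 V)} {k : ℕ} (v : V)
    (hV : 2 ≤ Fintype.card V) (h : ∀ X : Finset V, v ∈ X → X ≠ Finset.univ → k ≤ cutDeg Es X) :
    KEdgeConnected Es k := by
  refine ⟨hV, fun X hX hXV => ?_⟩
  by_cases hv : v ∈ X
  · exact h X hv hXV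
  · rw [← cutDeg_compl]
    exact h Xᶜ (Finset.mem_compl.2 hv) (by simpa [Finset.compl_eq_univ_iff] using hX)

theorem KEdgeConnected.shift {u v w : V} {A : Multiset (Sym2 V)}
    (h : KEdgeConnected (s(u, v) ::ₘ A) 2)
    (hsep : ∀ X : Finset V, v ∈ X → u ∉ X → w ∉ X → 3 ≤ cutDeg (s(u, v) ::ₘ A) X) :
    KEdgeConnected (s(u, w) ::ₘ A) 2 := by
  refine kEdgeConnected_of_forall_mem v h.1 fun X hvX hXV => ?_
  have hX := h.2 X (Finset.ne_empty_of_mem hvX) hXV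
  by_cases huX : u ∈ X <;> by_cases hwX : w ∈ X
  · simp_all [cutDeg_cons_mk]
  · simp_all [cutDeg_cons_mk]
    omega
  · simp_all [cutDeg_cons_mk]
  · have h3 := hsep X hvX huX hwX
    simp_all [cutDeg_cons_mk]

theorem KEdgeConnected.splitOff {u v y : V} {A : Multiset (Sym2 V)}
    (h : KEdgeConnected (s(u, v) ::ₘ s(v, y) ::ₘ A) 2)
    (hsep : ∀ X : Finset V, v ∈ X → u ∉ X → y ∉ X → 4 ≤ cutDeg (s(u, v) ::ₘ s(v, y) ::ₘ A) X) :
    KEdgeConnected (s(u, y) ::ₘ A) 2 := by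
  refine kEdgeConnected_of_forall_mem v h.1 fun X hvX hXV => ?_
  have hX := h.2 X (Finset.ne_empty_of_mem hvX) hXV
  by_cases huX : u ∈ X <;> by_cases hyX : y ∈ X
  · simp_all [cutDeg_cons_mk]
  · simp_all [cutDeg_cons_mk]
  · simp_all [cutDeg_cons_mk]
  · have h4 := hsep X hvX huX hyX
    simp_all [cutDeg_cons_mk]

theorem cutDeg_erase_add_countP_le (Es : Multiset (Sym2 V)) {X : Finset V} {v : V}
    (hv : v ∈ X) :
    cutDeg Es (X.erase v) + Es.countP (Joins {v} Xᶜ)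
      ≤ cutDeg Es X + Es.countP (Joins {v} (X.erase v)) := by
  induction Es using Multiset.induction_on with
  | empty => simp [cutDeg]
  | cons e Es ih =>
    induction e using Sym2.ind with
    | _ a b =>
      simp only [cutDeg_cons_mk, countP_cons, joins_mk, Finset.mem_erase, Finset.mem_compl,
        Finset.mem_singleton]
      by_cases ha : a ∈ X <;> by_cases hb : b ∈ X <;> by_cases hav : a = v <;>
        by_cases hbv : b = v <;> simp_all <;> omega

theorem cutDeg_sdiff_add_cutDeg_sdiff_le (Es : Multiset (Sym2 V)) (X W : Finset V) :
    cutDeg Es (X \ W) + cutDeg Es (W \ X) + 2 * Es.countP (Joins (X ∩ W) (X ∪ W)ᶜ)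
      ≤ cutDeg Es X + cutDeg Es W := by
  induction Es using Multiset.induction_on with
  | empty => simp [cutDeg]
  | cons e Es ih =>
    induction e using Sym2.ind with
    | _ a b =>
      simp only [cutDeg_cons_mk, countP_cons, joins_mk, Finset.mem_sdiff, Finset.mem_inter,
        Finset.mem_union, Finset.mem_compl]
      by_cases ha : a ∈ X <;> by_cases hb : b ∈ X <;> by_cases haW : a ∈ W <;>
        by_cases hbW : b ∈ W <;> simp_all <;> omega

end Cuts

section TightCut

variable {V : Type*} [Fintype V]

theorem four_le_cutDeg_of_tight {B : Multiset (Sym2 V)} {u v v₁ y : V} {X W : Finset V}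
    (hE : KEdgeConnected (s(u, v) ::ₘ B) 2) (hv₁ : s(v, v₁) ∈ B)
    (hvX : v ∈ X) (huX : u ∉ X) (hv₁X : v₁ ∉ X) (hyX : y ∈ X)
    (hX : cutDeg (s(u, v) ::ₘ B) X ≤ 2) (hvW : v ∈ W) (huW : u ∉ W) (hyW : y ∉ W) :
    4 ≤ cutDeg (s(u, v) ::ₘ B) W := by
  have key := cutDeg_sdiff_add_cutDeg_sdiff_le (s(u, v) ::ₘ B) X W
  have hXW : 2 ≤ cutDeg (s(u, v) ::ₘ B) (X \ W) :=
    hE.2 _ (Finset.ne_empty_of_mem (Finset.mem_sdiff.2 ⟨hyX, hyW⟩))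
      (fun h => (Finset.mem_sdiff.1 (h ▸ Finset.mem_univ v)).2 hvW)
  have huv : Joins (X ∩ W) (X ∪ W)ᶜ s(u, v) := joins_mk.2 <| Or.inr
    ⟨Finset.mem_inter.2 ⟨hvX, hvW⟩, by simp [huX, huW]⟩
  rw [countP_cons, if_pos huv] at key
  by_cases hv₁W : v₁ ∈ W
  · have hWX : 2 ≤ cutDeg (s(u, v) ::ₘ B) (W \ X) :=
      hE.2 _ (Finset.ne_empty_of_mem (Finset.mem_sdiff.2 ⟨hv₁W, hv₁X⟩))
        (fun h => huW (Finset.mem_sdiff.1 (h ▸ Finset.mem_univ u)).1)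
    omega
  · have hvv₁ : 0 < B.countP (Joins (X ∩ W) (X ∪ W)ᶜ) := countP_pos.2
      ⟨_, hv₁, joins_mk.2 <| Or.inl ⟨Finset.mem_inter.2 ⟨hvX, hvW⟩, by simp [hv₁X, hv₁W]⟩⟩
    omega

variable {G : SimpleGraph V} [DecidableRel G.Adj]

theorem countP_edgeFinset (P : Sym2 V → Prop) :
    G.edgeFinset.val.countP P = (G.edgeFinset.filter P).card := by
  rw [countP_eq_card_filter, ← Finset.filter_val, Finset.card_val]

theorem countP_edgeFinset_joins_le_one {v v₁ : V} {Z : Finset V} (hv : G.degree v = 2)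
    (hvv₁ : G.Adj v v₁) (hv₁Z : v₁ ∉ Z) :
    G.edgeFinset.val.countP (Joins {v} Z) ≤ 1 := by
  have hv₁ : s(v, v₁) ∈ G.incidenceFinset v :=
    (G.mem_incidenceFinset _ _).2 ⟨hvv₁, Sym2.mem_mk_left _ _⟩
  rw [countP_edgeFinset]
  calc (G.edgeFinset.filter (Joins {v} Z)).card
      ≤ ((G.incidenceFinset v).erase s(v, v₁)).card := by
        refine Finset.card_le_card fun e he => ?_
        obtain ⟨heG, a, b, rfl, ha, hb⟩ := Finset.mem_filter.1 he
        obtain rfl := Finset.mem_singleton.1 ha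
        refine Finset.mem_erase.2 ⟨fun h => hv₁Z (Sym2.congr_right.1 h ▸ hb), ?_⟩
        exact (G.mem_incidenceFinset _ _).2 ⟨G.mem_edgeFinset.1 heG, Sym2.mem_mk_left _ _⟩
    _ = 1 := by rw [Finset.card_erase_of_mem hv₁, G.card_incidenceFinset_eq_degree, hv]

theorem exists_link_of_tight {L : Multiset (Sym2 V)} {u v v₁ : V} {X : Finset V}
    (hE : KEdgeConnected (s(u, v) ::ₘ (G.edgeFinset.val + L)) 2)
    (hv : G.degree v = 2) (hvv₁ : G.Adj v v₁) (hvX : v ∈ X) (huX : u ∉ X) (hv₁X : v₁ ∉ X)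
    (hX : cutDeg (s(u, v) ::ₘ (G.edgeFinset.val + L)) X ≤ 2) :
    ∃ y ∈ X, y ≠ v ∧ s(v, y) ∈ L := by
  have huv : u ≠ v := fun h => huX (h ▸ hvX)
  obtain ⟨v₂, hv₂, hv₂v₁⟩ := (G.neighborFinset v).exists_mem_ne (by simp [hv]) v₁
  rw [G.mem_neighborFinset] at hv₂
  have hv₂X : v₂ ∈ X := by
    by_contra hv₂X
    have htree : 2 ≤ G.edgeFinset.val.countP (Joins X Xᶜ) := by
      have hne : s(v, v₁) ≠ s(v, v₂) := fun h => hv₂v₁ (Sym2.congr_right.1 h).symm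
      rw [countP_edgeFinset, ← Finset.card_pair hne]
      refine Finset.card_le_card fun e he => ?_
      rcases Finset.mem_insert.1 he with rfl | he
      · simp [joins_mk, hvX, hv₁X, hvv₁]
      · obtain rfl := Finset.mem_singleton.1 he
        simp [joins_mk, hvX, hv₂X, hv₂]
    rw [cutDeg_eq_countP, countP_cons, countP_add,
      if_pos (joins_mk.2 (Or.inr ⟨hvX, by simpa⟩))] at hX
    omega
  have hZ : 2 ≤ cutDeg (s(u, v) ::ₘ (G.edgeFinset.val + L)) (X.erase v) :=
    hE.2 _ (Finset.ne_empty_of_mem (Finset.mem_erase.2 ⟨(G.ne_of_adj hv₂).symm, hv₂X⟩))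
      (fun h => Finset.notMem_erase v X (by rw [h]; exact Finset.mem_univ v))
  have hout : 2 ≤ (s(u, v) ::ₘ (G.edgeFinset.val + L)).countP (Joins {v} Xᶜ) := by
    have htree : 0 < G.edgeFinset.val.countP (Joins {v} Xᶜ) :=
      countP_pos.2 ⟨_, G.mem_edgeFinset.2 hvv₁, joins_mk.2 (Or.inl ⟨by simp, by simpa⟩)⟩
    rw [countP_cons, countP_add, if_pos (joins_mk.2 (Or.inr ⟨by simp, by simpa⟩))]
    omega
  have hsplit := cutDeg_erase_add_countP_le (s(u, v) ::ₘ (G.edgeFinset.val + L)) hvX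
  have htree := countP_edgeFinset_joins_le_one hv hvv₁ (Z := X.erase v) (by simp [hv₁X])
  have hlink : 0 < L.countP (Joins {v} (X.erase v)) := by
    rw [countP_cons (Joins {v} (X.erase v)), countP_add (Joins {v} (X.erase v)),
      if_neg (by simp [joins_mk, huX, huv])] at hsplit
    omega
  obtain ⟨e, heL, a, y, rfl, ha, hy⟩ := countP_pos.1 hlink
  obtain rfl := Finset.mem_singleton.1 ha
  exact ⟨y, Finset.mem_of_mem_erase hy, Finset.ne_of_mem_erase hy, heL⟩

end TightCut

section Paths

variable {V : Type*} {G : SimpleGraph V}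

theorem OnPath.symm {a b : V} {e : Sym2 V} (h : OnPath G a b e) : OnPath G b a e :=
  ⟨h.1.symm, fun w => by simpa using h.2 w.reverse⟩

theorem exists_adj_dist_lt_onPath {v w : V} (hr : G.Reachable v w) (hne : v ≠ w) :
    ∃ v₁, G.Adj v v₁ ∧ G.dist v₁ w < G.dist v w ∧
      ∀ e, OnPath G v₁ w e → OnPath G v w e := by
  obtain ⟨q, hq, hlen⟩ := hr.exists_path_of_dist
  cases q with
  | nil => exact absurd rfl hne
  | @cons _ v₁ _ hadj q =>
    rw [SimpleGraph.Walk.cons_isPath_iff] at hq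
    rw [SimpleGraph.Walk.length_cons] at hlen
    refine ⟨v₁, hadj, by have := SimpleGraph.dist_le q; omega, fun e he => ⟨hr, fun w => ?_⟩⟩
    have hw := he.2 (SimpleGraph.Walk.cons hadj.symm w)
    rw [SimpleGraph.Walk.edges_cons, List.mem_cons] at hw
    -- `s(v₁, v)` is not forced: the rest `q` of the shortest path avoids `v`.
    refine hw.resolve_left fun hev => hq.2 ?_
    exact SimpleGraph.Walk.snd_mem_support_of_mem_edges q (hev ▸ he.2 q)

end Paths

section Costs

variable {V : Type*} (c : V → V → ℕ → ℝ≥0∞)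

theorem solCost_cons (l : V × V × ℕ) (F : Multiset (V × V × ℕ)) :
    solCost c (l ::ₘ F) = c l.1 l.2.1 l.2.2 + solCost c F := by
  simp [solCost]

theorem cost_eq_of_mk_eq (hsymm : ∀ a b t, c a b t = c b a t) {a b x y : V}
    (h : s(a, b) = s(x, y)) (t : ℕ) : c a b t = c x y t := by
  rcases Sym2.eq_iff.1 h with ⟨rfl, rfl⟩ | ⟨rfl, rfl⟩
  · rfl
  · exact hsymm _ _ _

end Costs

section Solutions

variable {V : Type*} [Fintype V] (G : SimpleGraph V) [DecidableRel G.Adj]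

def augmentedEdges (F : Multiset (V × V × ℕ)) : Multiset (Sym2 V) :=
  G.edgeFinset.val + F.map (fun l => s(l.1, l.2.1))

theorem augmentedEdges_cons (l : V × V × ℕ) (F : Multiset (V × V × ℕ)) :
    augmentedEdges G (l ::ₘ F) = s(l.1, l.2.1) ::ₘ augmentedEdges G F := by
  simp only [augmentedEdges, map_cons, add_cons]

theorem finite_setOf_feasibleF (p : ℕ) :
    {F | FeasibleF G p F}.Finite := by
  let Λ : Finset (V × V × ℕ) := Finset.univ ×ˢ Finset.univ ×ˢ Finset.range (p + 1)
  refine ((p • Λ.val).powerset.toFinset.finite_toSet).subset fun F hF => ?_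
  rw [Finset.mem_coe, mem_toFinset, mem_powerset, le_iff_count]
  intro l
  by_cases hl : l ∈ F
  · have hcard : card F ≤ p := by
      simpa using (card_nsmul_le_sum (s := F.map fun l => l.2.2) (a := 1)
        (forall_mem_map_iff.2 fun l hl => (hF.1 l hl).2.1)).trans hF.2.1
    have hlΛ : l ∈ Λ := by simp [Λ, Nat.lt_succ_of_le (hF.1 l hl).2.2]
    rw [count_nsmul, count_eq_one_of_mem Λ.nodup hlΛ, mul_one]
    exact (count_le_card l F).trans hcard
  · rw [count_eq_zero_of_notMem hl]
    exact Nat.zero_le _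

variable {G} {p : ℕ}

theorem feasibleF_cons_iff {l : V × V × ℕ} {F : Multiset (V × V × ℕ)} :
    FeasibleF G p (l ::ₘ F) ↔ ValidLink p l ∧ (∀ l' ∈ F, ValidLink p l') ∧
      l.2.2 + (F.map fun l => l.2.2).sum ≤ p ∧
      KEdgeConnected (s(l.1, l.2.1) ::ₘ augmentedEdges G F) 2 := by
  change (∀ l' ∈ l ::ₘ F, ValidLink p l') ∧ ((l ::ₘ F).map fun l => l.2.2).sum ≤ p ∧
      KEdgeConnected (augmentedEdges G (l ::ₘ F)) 2 ↔ _
  rw [forall_mem_cons, map_cons, sum_cons, augmentedEdges_cons, and_assoc]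

theorem FeasibleF.of_cons {u v : V} {t : ℕ} {F : Multiset (V × V × ℕ)}
    (hF : FeasibleF G p ((u, v, t) ::ₘ F))
    (hsep : ∀ X : Finset V, v ∈ X → u ∉ X →
      3 ≤ cutDeg (augmentedEdges G ((u, v, t) ::ₘ F)) X) :
    FeasibleF G p F := by
  obtain ⟨-, hF, hw, hE⟩ := feasibleF_cons_iff.1 hF
  rw [augmentedEdges_cons] at hsep
  have hE' := hE.shift (w := u) fun X hvX huX _ => hsep X hvX huX
  exact ⟨hF, by omega, hE'.1, fun X hX hXV => cutDeg_cons_self u _ X ▸ hE'.2 X hX hXV⟩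

theorem FeasibleF.shift {u v w : V} {t : ℕ} {F : Multiset (V × V × ℕ)}
    (hF : FeasibleF G p ((u, v, t) ::ₘ F)) (huw : u ≠ w)
    (hsep : ∀ X : Finset V, v ∈ X → u ∉ X → w ∉ X →
      3 ≤ cutDeg (augmentedEdges G ((u, v, t) ::ₘ F)) X) :
    FeasibleF G p ((u, w, t) ::ₘ F) := by
  obtain ⟨hl, hF, hw, hE⟩ := feasibleF_cons_iff.1 hF
  rw [augmentedEdges_cons] at hsep
  exact feasibleF_cons_iff.2 ⟨⟨huw, hl.2⟩, hF, hw, hE.shift hsep⟩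

theorem FeasibleF.merge {u v y : V} {t : ℕ} {e : V × V × ℕ} {F : Multiset (V × V × ℕ)}
    (hF : FeasibleF G p ((u, v, t) ::ₘ e ::ₘ F)) (he : s(e.1, e.2.1) = s(v, y)) (huy : u ≠ y)
    (hsep : ∀ X : Finset V, v ∈ X → u ∉ X → y ∉ X →
      4 ≤ cutDeg (augmentedEdges G ((u, v, t) ::ₘ e ::ₘ F)) X) :
    FeasibleF G p ((u, y, t + e.2.2) ::ₘ F) := by
  obtain ⟨hl, hF, hw, hE⟩ := feasibleF_cons_iff.1 hF
  rw [forall_mem_cons] at hF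
  rw [map_cons, sum_cons] at hw
  rw [augmentedEdges_cons, he] at hE
  simp only [augmentedEdges_cons, he] at hsep
  have ht := hl.2.1
  dsimp only at hw ht
  refine feasibleF_cons_iff.2 ⟨⟨huy, ?_, ?_⟩, hF.2, ?_, hE.splitOff hsep⟩ <;> dsimp only <;> omega

variable (c : V → V → ℕ → ℝ≥0∞)

theorem exists_optimal_solution (hfeas : ∃ F, FeasibleF G p F) :
    ∃ F, FeasibleF G p F ∧ ∀ F', FeasibleF G p F' → solCost c F ≤ solCost c F' :=
  Set.exists_min_image _ (solCost c) (finite_setOf_feasibleF G p) hfeas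

theorem exists_feasibleF_oriented (hsymm : ∀ a b t, c a b t = c b a t) (u : V)
    {F : Multiset (V × V × ℕ)} (hF : FeasibleF G p F) :
    ∃ F', FeasibleF G p F' ∧ solCost c F' = solCost c F ∧ ∀ l ∈ F', l.2.1 ≠ u := by
  set o : V × V × ℕ → V × V × ℕ := fun l => if l.2.1 = u then (u, l.1, l.2.2) else l
  have hedge (l : V × V × ℕ) : s((o l).1, (o l).2.1) = s(l.1, l.2.1) := by
    by_cases h : l.2.1 = u <;> simp [o, h, Sym2.eq_swap]
  have hweight (l : V × V × ℕ) : (o l).2.2 = l.2.2 := by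
    by_cases h : l.2.1 = u <;> simp [o, h]
  have hvalid (l : V × V × ℕ) (hl : ValidLink p l) : ValidLink p (o l) ∧ (o l).2.1 ≠ u := by
    by_cases h : l.2.1 = u
    · simp only [o, if_pos h]
      exact ⟨⟨fun h' => hl.1 (h'.symm.trans h.symm), hl.2⟩, fun h' => hl.1 (h'.trans h.symm)⟩
    · simp only [o, if_neg h]
      exact ⟨hl, h⟩
  refine ⟨F.map o, ⟨?_, ?_, ?_⟩, ?_, ?_⟩
  · exact forall_mem_map_iff.2 fun l hl => (hvalid l (hF.1 l hl)).1
  · simpa [map_map, Function.comp_def, hweight] using hF.2.1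
  · simpa [map_map, Function.comp_def, hedge] using hF.2.2
  · unfold solCost
    rw [map_map]
    refine congrArg sum (map_congr rfl fun l _ => ?_)
    rw [Function.comp_apply, hweight l]
    exact cost_eq_of_mk_eq c hsymm (hedge l) _
  · exact forall_mem_map_iff.2 fun l hl => (hvalid l (hF.1 l hl)).2

end Solutions

section LeafPotential

variable {V : Type*} [Fintype V] (G : SimpleGraph V) [DecidableRel G.Adj]
  (sel : V → G.ConnectedComponent → ℕ → V)

/-- The node towards which a link `(u, v, t)` at the leaf `u` is slid: `u` itself if the link
is internal, the selector `S_t(u, K)` of the component `K` of `v` if it is external. -/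
noncomputable def leafTarget (u v : V) (t : ℕ) : V :=
  if G.Reachable u v then u else sel u (G.connectedComponentMk v) t

noncomputable def leafDist (u : V) (l : V × V × ℕ) : ℕ :=
  if l.1 = u then G.dist l.2.1 (leafTarget G sel u l.2.1 l.2.2) else 0

/-- Sliding a link decreases `leafDist`; merging two links decreases the number of links. -/
noncomputable def leafPotential (u : V) (F : Multiset (V × V × ℕ)) : ℕ ×ₗ ℕ :=
  toLex (card F, (F.map (leafDist G sel u)).sum)

variable {G sel}

theorem leafPotential_lt_of_card_lt {u : V} {F F' : Multiset (V × V × ℕ)} (h : card F' < card F) :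
    leafPotential G sel u F' < leafPotential G sel u F :=
  Prod.Lex.toLex_lt_toLex.2 (Or.inl h)

theorem leafPotential_cons_lt_cons {u : V} {l l' : V × V × ℕ} (F : Multiset (V × V × ℕ))
    (h : leafDist G sel u l' < leafDist G sel u l) :
    leafPotential G sel u (l' ::ₘ F) < leafPotential G sel u (l ::ₘ F) :=
  Prod.Lex.toLex_lt_toLex.2 (Or.inr ⟨by simp, by simpa using h⟩)

theorem reachable_leafTarget
    (hsel_mem : ∀ (a : V) (K : G.ConnectedComponent) (t : ℕ),
      G.connectedComponentMk a ≠ K → G.connectedComponentMk (sel a K t) = K)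
    (u v : V) (t : ℕ) : G.Reachable v (leafTarget G sel u v t) := by
  unfold leafTarget
  split_ifs with h
  · exact h.symm
  · exact SimpleGraph.ConnectedComponent.exact
      (hsel_mem u _ t fun h' => h (SimpleGraph.ConnectedComponent.exact h')).symm

theorem leafTarget_of_adj {u v v₁ : V} (t : ℕ) (h : G.Adj v v₁) :
    leafTarget G sel u v₁ t = leafTarget G sel u v t := by
  have hr : G.Reachable u v₁ ↔ G.Reachable u v :=
    ⟨fun h' => h'.trans h.reachable.symm, fun h' => h'.trans h.reachable⟩
  simp only [leafTarget, hr, SimpleGraph.ConnectedComponent.sound h.reachable.symm]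

theorem ne_leafTarget {p : ℕ} {u v : V} {t : ℕ} (hl : ValidLink p (u, v, t))
    (hv : ∀ (K : G.ConnectedComponent) (t' : ℕ), 1 ≤ t' → t' ≤ p →
      K ≠ G.connectedComponentMk u → v ≠ sel u K t') :
    v ≠ leafTarget G sel u v t := by
  unfold leafTarget
  split_ifs with h
  · exact hl.1.symm
  · exact hv _ t hl.2.1 hl.2.2 fun h' => h (SimpleGraph.ConnectedComponent.exact h'.symm)

/-- Moving the far end of the link one step towards its target yields a shadow of it. -/
theorem exists_adj_slide {p : ℕ} {c : V → V → ℕ → ℝ≥0∞}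
    (hsel_mem : ∀ (a : V) (K : G.ConnectedComponent) (t : ℕ),
      G.connectedComponentMk a ≠ K → G.connectedComponentMk (sel a K t) = K)
    (hmetric : IsMetricForestInstance G sel p c) {u v : V} {t : ℕ} (hu : G.degree u = 1)
    (hl : ValidLink p (u, v, t)) (hvt : v ≠ leafTarget G sel u v t) :
    ∃ v₁, G.Adj v v₁ ∧ (v₁ ≠ u →
      c u v₁ t ≤ c u v t ∧ leafDist G sel u (u, v₁, t) < leafDist G sel u (u, v, t)) := by
  obtain ⟨v₁, hadj, hdist, hpath⟩ :=
    exists_adj_dist_lt_onPath (reachable_leafTarget hsel_mem u v t) hvt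
  refine ⟨v₁, hadj, fun hv₁u => ⟨hmetric.1 (u, v, t) (u, v₁, t) hl ⟨hv₁u.symm, hl.2⟩ ?_, ?_⟩⟩
  · unfold leafTarget at hpath
    by_cases hr : G.Reachable u v
    · rw [if_pos hr] at hpath
      exact Or.inr (Or.inl ⟨hr, hr.trans hadj.reachable, .refl u, le_rfl,
        fun e he => (hpath e he.symm).symm⟩)
    · rw [if_neg hr] at hpath
      exact Or.inr (Or.inr ⟨rfl, hu, hr, hadj.reachable, le_rfl, hpath⟩)
  · simpa [leafDist, leafTarget_of_adj t hadj] using hdist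

end LeafPotential

section Improvement

variable {V : Type*} [Fintype V] {G : SimpleGraph V} [DecidableRel G.Adj] {p : ℕ}
  {c : V → V → ℕ → ℝ≥0∞} {sel : V → G.ConnectedComponent → ℕ → V}

theorem exists_feasibleF_merge_of_tight (hsymm : ∀ a b t, c a b t = c b a t)
    (hmetric : IsMetricForestInstance G sel p c) {u v v₁ : V} {t : ℕ}
    {F : Multiset (V × V × ℕ)} (hF : FeasibleF G p ((u, v, t) ::ₘ F))
    (horient : ∀ l ∈ F, l.2.1 ≠ u) (hv : G.degree v = 2) (hvv₁ : G.Adj v v₁)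
    {X : Finset V} (hvX : v ∈ X) (huX : u ∉ X) (hv₁X : v₁ ∉ X)
    (hX : cutDeg (augmentedEdges G ((u, v, t) ::ₘ F)) X ≤ 2) :
    ∃ F', FeasibleF G p F' ∧ solCost c F' ≤ solCost c ((u, v, t) ::ₘ F) ∧
      (∀ l ∈ F', l.2.1 ≠ u) ∧ card F' < card ((u, v, t) ::ₘ F) := by
  have hE : KEdgeConnected (augmentedEdges G ((u, v, t) ::ₘ F)) 2 := hF.2.2
  rw [augmentedEdges_cons] at hE hX
  obtain ⟨y, hyX, hyv, hy⟩ := exists_link_of_tight hE hv hvv₁ hvX huX hv₁X hX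
  obtain ⟨e, heF, he⟩ := mem_map.1 hy
  have huy : u ≠ y := fun h => huX (h ▸ hyX)
  have hsep (W : Finset V) (hvW : v ∈ W) (huW : u ∉ W) (hyW : y ∉ W) :
      4 ≤ cutDeg (augmentedEdges G ((u, v, t) ::ₘ F)) W := by
    rw [augmentedEdges_cons]
    exact four_le_cutDeg_of_tight hE (mem_add.2 (Or.inl (G.mem_edgeFinset.2 hvv₁)))
      hvX huX hv₁X hyX hX hvW huW hyW
  rw [← cons_erase heF] at hF hsep ⊢
  obtain ⟨hl, hlinks, hw, -⟩ := feasibleF_cons_iff.1 hF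
  have he₂ := (hlinks e (mem_cons_self _ _)).2.1
  rw [map_cons, sum_cons] at hw
  dsimp only at hw
  refine ⟨(u, y, t + e.2.2) ::ₘ F.erase e, hF.merge he huy hsep, ?_, ?_, by simp⟩
  · calc solCost c ((u, y, t + e.2.2) ::ₘ F.erase e)
        ≤ c u v t + c v y e.2.2 + solCost c (F.erase e) := by
          rw [solCost_cons]
          gcongr
          exact hmetric.2 u v y t e.2.2 (t + e.2.2) hl.1 (Ne.symm hyv) huy hl.2.1 he₂
            (by omega) le_rfl
      _ = solCost c ((u, v, t) ::ₘ e ::ₘ F.erase e) := by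
          rw [solCost_cons, solCost_cons, cost_eq_of_mk_eq c hsymm he, add_assoc]
  · intro l hl
    rcases mem_cons.1 hl with rfl | hl
    · exact huy.symm
    · exact horient l (mem_of_mem_erase hl)

theorem exists_feasibleF_leafPotential_lt (hsymm : ∀ a b t, c a b t = c b a t)
    (hsel_mem : ∀ (a : V) (K : G.ConnectedComponent) (t : ℕ),
      G.connectedComponentMk a ≠ K → G.connectedComponentMk (sel a K t) = K)
    (hmetric : IsMetricForestInstance G sel p c) {u v : V} {t : ℕ} (hu : G.degree u = 1)
    {F : Multiset (V × V × ℕ)} (hF : FeasibleF G p F) (horient : ∀ l ∈ F, l.2.1 ≠ u)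
    (hl : (u, v, t) ∈ F) (hv : G.degree v = 2) (hvt : v ≠ leafTarget G sel u v t) :
    ∃ F', FeasibleF G p F' ∧ solCost c F' ≤ solCost c F ∧ (∀ l ∈ F', l.2.1 ≠ u) ∧
      leafPotential G sel u F' < leafPotential G sel u F := by
  rw [← cons_erase hl] at hF horient ⊢
  obtain ⟨v₁, hvv₁, hslide⟩ :=
    exists_adj_slide hsel_mem hmetric hu (hF.1 _ (mem_cons_self _ _)) hvt
  have hrest : ∀ l ∈ F.erase (u, v, t), l.2.1 ≠ u := fun l hl => horient l (mem_cons_of_mem hl)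
  by_cases htight : ∃ X : Finset V, v ∈ X ∧ u ∉ X ∧ v₁ ∉ X ∧
      cutDeg (augmentedEdges G ((u, v, t) ::ₘ F.erase (u, v, t))) X ≤ 2
  · obtain ⟨X, hvX, huX, hv₁X, hX⟩ := htight
    obtain ⟨F', hF', hcost, horient', hcard⟩ :=
      exists_feasibleF_merge_of_tight hsymm hmetric hF hrest hv hvv₁ hvX huX hv₁X hX
    exact ⟨F', hF', hcost, horient', leafPotential_lt_of_card_lt hcard⟩
  push Not at htight
  by_cases hv₁u : v₁ = u
  · subst v₁
    refine ⟨F.erase (u, v, t), hF.of_cons fun X hvX huX => htight X hvX huX huX, ?_, hrest,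
      leafPotential_lt_of_card_lt (by simp)⟩
    rw [solCost_cons]
    exact le_add_self
  · obtain ⟨hcost, hdist⟩ := hslide hv₁u
    refine ⟨(u, v₁, t) ::ₘ F.erase (u, v, t), hF.shift (Ne.symm hv₁u) htight, ?_, ?_,
      leafPotential_cons_lt_cons _ hdist⟩
    · rw [solCost_cons, solCost_cons]
      gcongr
    · intro l hl
      rcases mem_cons.1 hl with rfl | hl
      · exact hv₁u
      · exact hrest l hl

end Improvement

theorem exists_optimal_leaf_links_to_corners_or_selectors_general
    {V : Type*} [Fintype V]
    (G : SimpleGraph V) [DecidableRel G.Adj]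
    (p : ℕ) (c : V → V → ℕ → ℝ≥0∞) (hsymm : ∀ a b t, c a b t = c b a t)
    (sel : V → G.ConnectedComponent → ℕ → V)
    (hsel_mem : ∀ (a : V) (K : G.ConnectedComponent) (t : ℕ),
      G.connectedComponentMk a ≠ K → G.connectedComponentMk (sel a K t) = K)
    (hmetric : IsMetricForestInstance G sel p c)
    (u : V) (hu : G.degree u = 1)
    (hfeas : ∃ F : Multiset (V × V × ℕ), FeasibleF G p F) :
    ∃ F : Multiset (V × V × ℕ), FeasibleF G p F ∧
      (∀ F' : Multiset (V × V × ℕ), FeasibleF G p F' → solCost c F ≤ solCost c F') ∧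
      ∀ l ∈ F,
        (l.1 = u → (G.degree l.2.1 ≠ 2 ∨ ∃ (K : G.ConnectedComponent) (t : ℕ),
          1 ≤ t ∧ t ≤ p ∧ K ≠ G.connectedComponentMk u ∧ l.2.1 = sel u K t)) ∧
        (l.2.1 = u → (G.degree l.1 ≠ 2 ∨ ∃ (K : G.ConnectedComponent) (t : ℕ),
          1 ≤ t ∧ t ≤ p ∧ K ≠ G.connectedComponentMk u ∧ l.1 = sel u K t)) := by
  obtain ⟨F₀, hF₀, hopt₀⟩ := exists_optimal_solution c hfeas
  obtain ⟨F₁, hF₁, hcost₁, horient₁⟩ := exists_feasibleF_oriented c hsymm u hF₀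
  obtain ⟨F, ⟨hF, hopt, horient⟩, hmin⟩ := Set.exists_min_image
    {F | FeasibleF G p F ∧ (∀ F', FeasibleF G p F' → solCost c F ≤ solCost c F') ∧
      ∀ l ∈ F, l.2.1 ≠ u}
    (leafPotential G sel u) ((finite_setOf_feasibleF G p).subset fun F hF => hF.1)
    ⟨F₁, hF₁, hcost₁ ▸ hopt₀, horient₁⟩
  refine ⟨F, hF, hopt, fun ⟨a, v, t⟩ hl => ⟨fun hau => ?_, fun hvu => absurd hvu (horient _ hl)⟩⟩
  obtain rfl : a = u := hau
  by_contra hbad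
  push Not at hbad
  obtain ⟨F', hF', hcost, horient', hlt⟩ := exists_feasibleF_leafPotential_lt hsymm hsel_mem
    hmetric hu hF horient hl hbad.1 (ne_leafTarget (hF.1 _ hl) hbad.2)
  exact (hmin F' ⟨hF', fun F'' hF'' => hcost.trans (hopt F'' hF''), horient'⟩).not_gt hlt

/-- Let `(V, E)` be a forest with at least two components, equipped with a metric
weighted link instance with parameter `p` (with respect to a fixed choice of the
selector nodes), and let `u` be a leaf.  If a feasible solution exists, then there is
an optimal feasible solution `F` such that every link of `F` incident to `u` has its
other endpoint in `R ∪ S_u`, where `R` is the set of nodes of degree `≠ 2` and `S_u`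
is the set of selector nodes of `u`. -/
theorem exists_optimal_leaf_links_to_corners_or_selectors
    {V : Type*} [Fintype V] [DecidableEq V]
    (G : SimpleGraph V) [DecidableRel G.Adj] (hforest : G.IsAcyclic)
    (p : ℕ) (c : V → V → ℕ → ℝ≥0∞) (hsymm : ∀ a b t, c a b t = c b a t)
    (sel : V → G.ConnectedComponent → ℕ → V)
    (hsel_mem : ∀ (a : V) (K : G.ConnectedComponent) (t : ℕ),
      G.connectedComponentMk a ≠ K → G.connectedComponentMk (sel a K t) = K)
    (hsel_min : ∀ (a : V) (K : G.ConnectedComponent) (t : ℕ), G.degree a = 1 →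
      G.connectedComponentMk a ≠ K → 1 ≤ t → t ≤ p →
      ∃ t₀, 1 ≤ t₀ ∧ t₀ ≤ t ∧ ∀ (z : V) (t' : ℕ), G.connectedComponentMk z = K →
        1 ≤ t' → t' ≤ t → c a (sel a K t) t₀ ≤ c a z t')
    (hmetric : IsMetricForestInstance G sel p c)
    (u : V) (hu : G.degree u = 1) (hr : ∃ w : V, ¬ G.Reachable u w)
    (hfeas : ∃ F : Multiset (V × V × ℕ), FeasibleF G p F) :
    ∃ F : Multiset (V × V × ℕ), FeasibleF G p F ∧
      (∀ F' : Multiset (V × V × ℕ), FeasibleF G p F' → solCost c F ≤ solCost c F') ∧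
      ∀ l ∈ F,
        (l.1 = u → (G.degree l.2.1 ≠ 2 ∨ ∃ (K : G.ConnectedComponent) (t : ℕ),
          1 ≤ t ∧ t ≤ p ∧ K ≠ G.connectedComponentMk u ∧ l.2.1 = sel u K t)) ∧
        (l.2.1 = u → (G.degree l.1 ≠ 2 ∨ ∃ (K : G.ConnectedComponent) (t : ℕ),
          1 ≤ t ∧ t ≤ p ∧ K ≠ G.connectedComponentMk u ∧ l.1 = sel u K t)) :=
  exists_optimal_leaf_links_to_corners_or_selectors_general G p c hsymm sel hsel_mem hmetric u hu
    hfeas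
end
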